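/- arXiv:1206.4846 — 2 statements merged into one kernel-verified Lean document; each statement's English description precedes it below -/
import Mathlib

section
/- Let G₁ be a connected graph with Hamiltonian square such that some Hamiltonian cycle of (G₁)² contains an edge uv with u, v both neighbors in G₁ of a vertex x₁. Let G be obtained from G₁ by adding a new pendant vertex w adjacent only to x₁. Then G² is Hamiltonian. -/
/-!
Removing the edge `uv` from the given Hamiltonian cycle of `G₁²` leaves a Hamiltonian path
from `v` to `u`. Since `u` and `v` are neighbours of `x₁`, the pendant vertex `w` is adjacent to
both of them in `G²`, so the path closes through `w` into a Hamiltonian cycle of `G²`.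
-/

namespace SquarePaper

variable {V : Type*}

def sq (G : SimpleGraph V) : SimpleGraph V where
  Adj u v := G.Adj u v ∨ (u ≠ v ∧ ∃ w, G.Adj u w ∧ G.Adj w v)
  symm := by
    constructor
    intro u v h
    rcases h with h | ⟨hne, w, h1, h2⟩
    · exact Or.inl h.symm
    · exact Or.inr ⟨hne.symm, w, h2.symm, h1.symm⟩
  loopless := by
    constructor
    intro v h
    rcases h with h | ⟨hne, _⟩
    · exact G.loopless.irrefl v h
    · exact hne rfl

def IsCutVertex (G : SimpleGraph V) (v : V) : Prop :=
  G.Connected ∧ ¬ (G.induce {u | u ≠ v}).Connected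

/-- The new pendant vertex is `none`. -/
def addPendant (G : SimpleGraph V) (x : V) : SimpleGraph (Option V) where
  Adj a b :=
    (∃ u v : V, a = some u ∧ b = some v ∧ G.Adj u v) ∨
    (a = none ∧ b = some x) ∨ (b = none ∧ a = some x)
  symm := by
    constructor
    rintro a b (⟨u, v, h1, h2, h3⟩ | h | h)
    · exact Or.inl ⟨v, u, h2, h1, h3.symm⟩
    · exact Or.inr (Or.inr h)
    · exact Or.inr (Or.inl h)
  loopless := by
    constructor
    rintro a (⟨u, v, h1, h2, h3⟩ | ⟨h1, h2⟩ | ⟨h1, h2⟩) <;>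
      [skip; (rw [h1] at h2; exact Option.some_ne_none x h2.symm);
       (rw [h1] at h2; exact Option.some_ne_none x h2.symm)]
    rw [h1] at h2; rw [Option.some.injEq] at h2; rw [h2] at h3; exact G.loopless.irrefl _ h3

end SquarePaper

namespace SimpleGraph.Walk

variable {V W : Type*} {G : SimpleGraph V} {H : SimpleGraph W} {a u v : V}

lemma IsCycle.eq_snd_or_eq_penultimate_of_mem_edges {p : G.Walk u u} (hp : p.IsCycle)
    (h : s(u, v) ∈ p.edges) : v = p.snd ∨ v = p.penultimate := by
  have : v ∈ p.toSubgraph.neighborSet u := adj_toSubgraph_iff_mem_edges.mpr h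
  rwa [hp.neighborSet_toSubgraph_endpoint] at this

variable [DecidableEq V]

lemma IsHamiltonianCycle.reverse {p : G.Walk a a} (hp : p.IsHamiltonianCycle) :
    p.reverse.IsHamiltonianCycle := by
  have := hp.finite
  cases nonempty_fintype V
  rw [isHamiltonianCycle_iff_isCycle_and_length_eq] at hp ⊢
  exact ⟨hp.1.reverse, by rw [length_reverse, hp.2]⟩

lemma IsHamiltonianCycle.isHamiltonian_tail_copy {p : G.Walk u u} (hp : p.IsHamiltonianCycle)
    (h : p.snd = v) : (p.tail.copy h rfl).IsHamiltonian := by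
  simpa [IsHamiltonian] using hp.isHamiltonian_tail

lemma IsHamiltonianCycle.exists_isHamiltonian_of_mem_edges {p : G.Walk a a}
    (hp : p.IsHamiltonianCycle) (h : s(u, v) ∈ p.edges) : ∃ q : G.Walk v u, q.IsHamiltonian := by
  have hu : u ∈ p.support := p.fst_mem_support_of_mem_edges h
  have hr : (p.rotate u hu).IsHamiltonianCycle := hp.rotate hu
  have hr_edge : s(u, v) ∈ (p.rotate u hu).edges := (rotate_edges p u hu).mem_iff.mpr h
  rcases hr.isCycle.eq_snd_or_eq_penultimate_of_mem_edges hr_edge with hsnd | hpen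
  · exact ⟨_, hr.isHamiltonian_tail_copy hsnd.symm⟩
  · exact ⟨_, hr.reverse.isHamiltonian_tail_copy (by rw [snd_reverse, hpen])⟩

variable [DecidableEq W]

lemma IsHamiltonian.isHamiltonianCycle_cons_concat_map {f : G →g H}
    (hf : Function.Injective f) {w : W} (hw : (Set.range f)ᶜ = {w}) {p : G.Walk v u}
    (hp : p.IsHamiltonian) (huv : u ≠ v) (hv : H.Adj w (f v)) (hu : H.Adj (f u) w) :
    (cons hv ((p.map f).concat hu)).IsHamiltonianCycle := by
  have hrange : ∀ b, b ∈ Set.range f ↔ b ≠ w := fun b => by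
    rw [← not_iff_not, ← Set.mem_compl_iff, hw, Set.mem_singleton_iff, not_not]
  have hq_path : ((p.map f).concat hu).IsPath := by
    refine (hp.isPath.map hf).concat (fun h => ?_) hu
    rw [support_map, List.mem_map] at h
    obtain ⟨x, -, hx⟩ := h
    exact (hrange w).mp ⟨x, hx⟩ rfl
  have hq : ((p.map f).concat hu).IsHamiltonian := by
    refine hq_path.isHamiltonian_of_mem fun b => ?_
    rw [support_concat, List.mem_append, support_map]
    by_cases hb : b = w
    · simp [hb]
    · obtain ⟨x, rfl⟩ := (hrange b).mpr hb
      exact Or.inl (List.mem_map_of_mem (hp.mem_support x))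
  have hp_len : p.length ≠ 0 := fun h => huv (eq_of_length_eq_zero h).symm
  refine ⟨(cons_isCycle_iff _ _).mpr ⟨hq_path, fun he => hp_len ?_⟩, ?_⟩
  · simpa using hq_path.length_eq_one_of_mem_edges (Sym2.eq_swap ▸ he)
  · simpa [IsHamiltonian] using hq

end SimpleGraph.Walk

namespace SquarePaper

variable {V W : Type*}

def sqMap {G : SimpleGraph V} {H : SimpleGraph W} (f : G →g H) (hf : Function.Injective f) :
    sq G →g sq H where
  toFun := f
  map_rel' := by
    rintro a b (h | ⟨hne, c, hac, hcb⟩)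
    · exact Or.inl (f.map_adj h)
    · exact Or.inr ⟨hf.ne hne, f c, f.map_adj hac, f.map_adj hcb⟩

def addPendantHom (G : SimpleGraph V) (x : V) : G →g addPendant G x where
  toFun := some
  map_rel' h := Or.inl ⟨_, _, rfl, rfl, h⟩

lemma sq_addPendant_adj_none_some {G : SimpleGraph V} {x u : V} (h : G.Adj u x) :
    (sq (addPendant G x)).Adj none (some u) :=
  Or.inr ⟨by simp, some x, Or.inr (Or.inl ⟨rfl, rfl⟩), Or.inl ⟨x, u, rfl, rfl, h.symm⟩⟩

theorem addPendant_type3_isHamiltonian_general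
    [Fintype V] [DecidableEq V] (G₁ : SimpleGraph V) (x₁ : V)
    (h₁ : ∃ (a : V) (C : (sq G₁).Walk a a), C.IsHamiltonianCycle ∧
      ∃ u v : V, G₁.Adj u x₁ ∧ G₁.Adj v x₁ ∧ s(u, v) ∈ C.edges) :
    (sq (addPendant G₁ x₁)).IsHamiltonian := by
  obtain ⟨a, C, hC, u, v, hux, hvx, he⟩ := h₁
  obtain ⟨P, hP⟩ := hC.exists_isHamiltonian_of_mem_edges he
  exact fun _ => ⟨none, _, hP.isHamiltonianCycle_cons_concat_map
    (f := sqMap (addPendantHom G₁ x₁) (Option.some_injective V)) (Option.some_injective V)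
    (Set.compl_range_some V) (C.adj_of_mem_edges he).ne
    (sq_addPendant_adj_none_some hvx) (sq_addPendant_adj_none_some hux).symm⟩

/-- Attaching a pendant vertex at a vertex `x₁` of type at most 3 keeps the square
Hamiltonian. -/
theorem addPendant_type3_isHamiltonian
    [Fintype V] [DecidableEq V] (G₁ : SimpleGraph V) (x₁ : V) (hc : G₁.Connected)
    (h₁ : ∃ (a : V) (C : (sq G₁).Walk a a), C.IsHamiltonianCycle ∧
      ∃ u v : V, G₁.Adj u x₁ ∧ G₁.Adj v x₁ ∧ s(u, v) ∈ C.edges) :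
    (sq (addPendant G₁ x₁)).IsHamiltonian :=
  addPendant_type3_isHamiltonian_general G₁ x₁ h₁

end SquarePaper
end

section
/- If T is a tree on at least 3 vertices in which some vertex is contained in at least three edges each of whose other endpoints is not a leaf, then T² is not Hamiltonian; equivalently, for a star-like case: if a vertex of a tree has at least three non-leaf neighbors, the square of the tree is not Hamiltonian. -/
namespace List

variable {α : Type*} {R : α → α → Prop} {S : Set α} {r : α}

theorem IsChain.mem_of_head_notMem (hport : ∀ u v, R u v → u ∉ S → v ∈ S → v = r)
    {a b : α} {l : List α} (hl : IsChain R (a :: l)) (ha : a ∉ S) (hb : b ∈ l) (hbS : b ∈ S) :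
    r ∈ l := by
  induction l generalizing a with
  | nil => simp at hb
  | cons c l ih =>
    rw [isChain_cons_cons] at hl
    by_cases hc : c ∈ S
    · exact hport a c hl.1 ha hc ▸ mem_cons_self
    · have hbl : b ∈ l := (mem_cons.mp hb).resolve_left (by rintro rfl; exact hc hbS)
      exact mem_cons_of_mem c (ih hl.2 hc hbl)

theorem IsChain.mem_of_getLast_notMem (hR : Std.Symm R)
    (hport : ∀ u v, R u v → u ∉ S → v ∈ S → v = r)
    {b c : α} {l : List α} (hl : IsChain R (l ++ [c])) (hc : c ∉ S) (hb : b ∈ l) (hbS : b ∈ S) :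
    r ∈ l := by
  have hrev : IsChain R (c :: l.reverse) := by
    simpa using isChain_reverse.mpr (hl.imp fun _ _ h => hR.symm _ _ h)
  exact mem_reverse.mp (hrev.mem_of_head_notMem hport hc (mem_reverse.mpr hb) hbS)

theorem IsChain.head_mem_or_getLast_mem (hR : Std.Symm R)
    (hport : ∀ u v, R u v → u ∉ S → v ∈ S → v = r)
    {l : List α} (hl : IsChain R l) (hnd : l.Nodup) {y : α} (hy : y ∈ l) (hyS : y ∈ S)
    (hyr : y ≠ r) :
    l.head (ne_nil_of_mem hy) ∈ S ∨ l.getLast (ne_nil_of_mem hy) ∈ S := by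
  by_contra! hends
  obtain ⟨l₁, l₂, rfl⟩ := append_of_mem hy
  obtain _ | ⟨a, l₁⟩ := l₁
  · simp_all
  obtain rfl | ⟨l₂, c, rfl⟩ := eq_nil_or_concat' l₂
  · simp_all
  have hr₁ : r ∈ l₁ := by
    have hchain : IsChain R (a :: (l₁ ++ [y])) := hl.infix ⟨[], l₂ ++ [c], by simp⟩
    have := hchain.mem_of_head_notMem hport (by simpa using hends.1) (by simp) hyS
    simpa [hyr.symm] using this
  have hr₂ : r ∈ l₂ := by
    have hchain : IsChain R ((y :: l₂) ++ [c]) := hl.infix ⟨a :: l₁, [], by simp⟩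
    have := hchain.mem_of_getLast_notMem hR hport (by simpa using hends.2) mem_cons_self hyS
    simpa [hyr.symm] using this
  exact (nodup_append.mp hnd).2.2 r (mem_cons_of_mem a hr₁) r (by simp [hr₂]) rfl

end List

namespace SimpleGraph

theorem IsHamiltonian.exists_isChain_deleteIncidenceSet {V : Type*} [Fintype V] [DecidableEq V]
    [Nontrivial V] {G : SimpleGraph V} (hG : G.IsHamiltonian) (x : V) :
    ∃ l : List V, l.Nodup ∧ (∀ v, v ∈ l ↔ v ≠ x) ∧ l.IsChain (G.deleteIncidenceSet x).Adj := by
  obtain ⟨q, hq⟩ := hG.exists_isHamiltonianCycle x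
  set w := q.tail.reverse
  have hw : w.IsHamiltonian := fun v => by
    rw [Walk.support_reverse, List.count_reverse]
    exact hq.isHamiltonian_tail v
  have hsupp : w.support = x :: w.support.tail := w.cons_tail_support.symm
  have hnd : (x :: w.support.tail).Nodup := hsupp ▸ hw.isPath.support_nodup
  have hmem : ∀ v, v ∈ w.support.tail ↔ v ≠ x := fun v =>
    ⟨by rintro hv rfl; exact (List.nodup_cons.mp hnd).1 hv,
      fun hv => (List.mem_cons.mp (hsupp ▸ hw.mem_support v)).resolve_left hv⟩
  refine ⟨w.support.tail, hnd.of_cons, hmem, ?_⟩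
  refine w.isChain_adj_support.tail.imp_of_mem_imp fun u v hu hv huv => ?_
  exact deleteIncidenceSet_adj.mpr ⟨huv, (hmem u).mp hu, (hmem v).mp hv⟩

end SimpleGraph

namespace SquarePaper

variable {V : Type*}

open SimpleGraph

def branch (T : SimpleGraph V) (x r : V) : Set V :=
  {v | (T.deleteIncidenceSet x).Reachable r v}

section Branch

variable {T : SimpleGraph V} {x r : V}

theorem mem_branch_of_adj {y : V} (hr : T.Adj x r) (hy : T.Adj r y) (hyx : y ≠ x) :
    y ∈ branch T x r :=
  (deleteIncidenceSet_adj.mpr ⟨hy, hr.ne', hyx⟩).reachable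

theorem eq_of_mem_branch_of_adj (hac : T.IsAcyclic) {v : V} (hr : T.Adj x r) (hv : T.Adj x v)
    (hvr : v ∈ branch T x r) : v = r := by
  by_contra hne
  refine isAcyclic_iff_forall_adj_isBridge.mp hac hv ?_
  have hle : T.deleteIncidenceSet x ≤ T.deleteEdges {s(x, v)} := by
    intro a b hab
    rw [deleteIncidenceSet_adj] at hab
    simp [hab.1, hab.2.1, hab.2.2]
  have hxr : (T.deleteEdges {s(x, v)}).Adj x r := by
    simp [hr, Ne.symm hne, hr.ne']
  exact hxr.reachable.trans (Reachable.mono hle hvr)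

theorem eq_of_mem_branch_of_mem_branch (hac : T.IsAcyclic) {r' v : V} (hr : T.Adj x r)
    (hr' : T.Adj x r') (hv : v ∈ branch T x r) (hv' : v ∈ branch T x r') : r = r' :=
  eq_of_mem_branch_of_adj hac hr' hr (Reachable.trans hv' (Reachable.symm hv))

theorem eq_of_sq_adj_of_notMem_branch (hac : T.IsAcyclic) (hr : T.Adj x r) {u v : V}
    (huv : ((sq T).deleteIncidenceSet x).Adj u v) (hu : u ∉ branch T x r)
    (hv : v ∈ branch T x r) : v = r := by
  obtain ⟨hsq, hux, hvx⟩ := deleteIncidenceSet_adj.mp huv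
  have hlift : ∀ {a b}, T.Adj a b → a ≠ x → b ≠ x → (T.deleteIncidenceSet x).Reachable b a :=
    fun hab ha hb => (deleteIncidenceSet_adj.mpr ⟨hab, ha, hb⟩).reachable.symm
  rcases hsq with hT | ⟨-, w, huw, hwv⟩
  · exact absurd (Reachable.trans hv (hlift hT hux hvx)) hu
  · by_cases hwx : w = x
    · exact eq_of_mem_branch_of_adj hac hr (hwx ▸ hwv) hv
    · exact absurd (Reachable.trans hv ((hlift hwv hwx hvx).trans (hlift huw hux hwx))) hu

end Branch

theorem tree_three_nonleaf_neighbors_not_isHamiltonian_general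
    [Fintype V] [DecidableEq V] (T : SimpleGraph V)
    (hac : T.IsAcyclic)
    (x a b c : V) (hab : a ≠ b) (hac' : a ≠ c) (hbc : b ≠ c)
    (hxa : T.Adj x a) (hxb : T.Adj x b) (hxc : T.Adj x c)
    (hna : ∃ y, T.Adj a y ∧ y ≠ x) (hnb : ∃ y, T.Adj b y ∧ y ≠ x)
    (hnc : ∃ y, T.Adj c y ∧ y ≠ x) :
    ¬ (sq T).IsHamiltonian := by
  intro hsq
  have : Nontrivial V := ⟨⟨a, b, hab⟩⟩
  obtain ⟨l, hnd, hmem, hchain⟩ := hsq.exists_isChain_deleteIncidenceSet x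
  have hl : l ≠ [] := List.ne_nil_of_mem ((hmem a).mpr hxa.ne')
  have hend : ∀ r, T.Adj x r → (∃ y, T.Adj r y ∧ y ≠ x) →
      l.head hl ∈ branch T x r ∨ l.getLast hl ∈ branch T x r := by
    rintro r hr ⟨y, hry, hyx⟩
    exact hchain.head_mem_or_getLast_mem ((sq T).deleteIncidenceSet x).symm
      (fun _ _ => eq_of_sq_adj_of_notMem_branch hac hr) hnd
      ((hmem y).mpr hyx) (mem_branch_of_adj hr hry hyx) hry.ne'
  rcases hend a hxa hna with ha | ha <;> rcases hend b hxb hnb with hb | hb <;>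
    rcases hend c hxc hnc with hc | hc <;>
    first
      | exact hab (eq_of_mem_branch_of_mem_branch hac hxa hxb ha hb)
      | exact hac' (eq_of_mem_branch_of_mem_branch hac hxa hxc ha hc)
      | exact hbc (eq_of_mem_branch_of_mem_branch hac hxb hxc hb hc)

/-- If some vertex of a tree on at least 3 vertices has three distinct non-leaf
neighbours, the square of the tree is not Hamiltonian. -/
theorem tree_three_nonleaf_neighbors_not_isHamiltonian
    [Fintype V] [DecidableEq V] (T : SimpleGraph V)
    (hcard : 3 ≤ Fintype.card V) (hconn : T.Connected) (hac : T.IsAcyclic)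
    (x a b c : V) (hab : a ≠ b) (hac' : a ≠ c) (hbc : b ≠ c)
    (hxa : T.Adj x a) (hxb : T.Adj x b) (hxc : T.Adj x c)
    (hna : ∃ y, T.Adj a y ∧ y ≠ x) (hnb : ∃ y, T.Adj b y ∧ y ≠ x)
    (hnc : ∃ y, T.Adj c y ∧ y ≠ x) :
    ¬ (sq T).IsHamiltonian :=
  tree_three_nonleaf_neighbors_not_isHamiltonian_general T hac x a b c hab hac' hbc hxa hxb hxc hna
    hnb hnc

end SquarePaper
end
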